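/- arXiv:2502.02280 — 4 statements merged into one kernel-verified Lean document; each statement's English description precedes it below -/
import Mathlib

section
/- There exist a global minimizer x̂ of f over C_s ∩ B and a constant l > 0 such that for every τ ∈ (0, min{1/l, 1}), x̂ ∈ Π_{C_s ∩ B}(x̂ − τ ∇f(x̂)). -/
open scoped RealInnerProductSpace
open Finset Filter

/-- `ℓ₀`-"norm": number of nonzero coordinates of `x`. -/
noncomputable def l0norm {n : ℕ} (x : EuclideanSpace ℝ (Fin n)) : ℕ :=
  Nat.card {i : Fin n // x i ≠ 0}

/-- The sparsity set `C_t = {x : ‖x‖₀ ≤ t}`. -/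
def sparseSet (n t : ℕ) : Set (EuclideanSpace ℝ (Fin n)) := {x | l0norm x ≤ t}

/-- The box `B = [0,1]ⁿ`. -/
def boxSet (n : ℕ) : Set (EuclideanSpace ℝ (Fin n)) := {x | ∀ i, 0 ≤ x i ∧ x i ≤ 1}

/-- Objective `f(x) = (1/m) ∑ i (xᵀ A_i x − y_i)²`. -/
noncomputable def fObj {n m : ℕ} (A : Fin m → Matrix (Fin n) (Fin n) ℝ) (y : Fin m → ℝ)
    (x : EuclideanSpace ℝ (Fin n)) : ℝ :=
  (1 / (m : ℝ)) * ∑ i, ((∑ u, ∑ v, x u * A i u v * x v) - y i) ^ 2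

/-- Euclidean projection set of `z` onto `S`. -/
def projSet {n : ℕ} (S : Set (EuclideanSpace ℝ (Fin n))) (z : EuclideanSpace ℝ (Fin n)) :
    Set (EuclideanSpace ℝ (Fin n)) :=
  {x | x ∈ S ∧ ∀ w ∈ S, ‖x - z‖ ≤ ‖w - z‖}

/-!
`C_s ∩ B` is compact (a finite union of coordinate subspaces cut down to the unit cube) and
contains `0`, so the continuous `f` attains its minimum on it at some `x̂`. As `f` is `C²`, its
derivative is `K`-Lipschitz on the compact convex cube, which gives the descent bound
`|f w - f x̂ - ⟪∇f x̂, w - x̂⟫| ≤ K ‖w - x̂‖²`. Together with `f x̂ ≤ f w` this yields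
`‖w - x̂‖² + 2τ⟪w - x̂, ∇f x̂⟫ ≥ 0` whenever `2τK ≤ 1`, which is exactly
`‖x̂ - z‖ ≤ ‖w - z‖` for `z = x̂ - τ ∇f x̂`; take `l = 2K + 1`.
-/

theorem contDiff_fObj {n m : ℕ} (A : Fin m → Matrix (Fin n) (Fin n) ℝ) (y : Fin m → ℝ) :
    ContDiff ℝ ⊤ (fObj A y) := by
  unfold fObj
  fun_prop

theorem zero_mem_sparseSet (n s : ℕ) : (0 : EuclideanSpace ℝ (Fin n)) ∈ sparseSet n s := by
  simp [sparseSet, l0norm]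

theorem sparseSet_eq_biUnion (n s : ℕ) :
    sparseSet n s = ⋃ T ∈ {T : Finset (Fin n) | #T ≤ s}, {x | ∀ i ∉ T, x i = 0} := by
  ext x
  simp only [sparseSet, l0norm, Nat.card_eq_fintype_card, Fintype.card_subtype,
    Set.mem_ofPred_eq, Set.mem_iUnion, exists_prop]
  constructor
  · exact fun hx => ⟨_, hx, fun i hi => by simpa using hi⟩
  · rintro ⟨T, hT, hx⟩
    refine (card_le_card fun i hi => ?_).trans hT
    by_contra h
    exact (mem_filter.1 hi).2 (hx i h)

theorem isClosed_sparseSet (n s : ℕ) : IsClosed (sparseSet n s) := by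
  rw [sparseSet_eq_biUnion]
  refine (Set.toFinite _).isClosed_biUnion fun T _ => ?_
  simp only [Set.ofPred_forall]
  exact isClosed_biInter fun i _ => isClosed_eq (by fun_prop) continuous_const

theorem boxSet_eq_preimage (n : ℕ) :
    boxSet n = WithLp.ofLp ⁻¹' Set.Icc (0 : Fin n → ℝ) 1 := by
  ext x
  simp [boxSet, Pi.le_def, forall_and]

theorem isCompact_boxSet (n : ℕ) : IsCompact (boxSet n) := by
  rw [boxSet_eq_preimage]
  exact (PiLp.homeomorph 2 _).isCompact_preimage.2 isCompact_Icc

theorem convex_boxSet (n : ℕ) : Convex ℝ (boxSet n) := by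
  rw [boxSet_eq_preimage]
  exact (convex_Icc _ _).linear_preimage (WithLp.linearEquiv 2 ℝ (Fin n → ℝ)).toLinearMap

theorem zero_mem_boxSet (n : ℕ) : (0 : EuclideanSpace ℝ (Fin n)) ∈ boxSet n := by
  simp [boxSet]

section Descent

variable {E F : Type*} [NormedAddCommGroup E] [NormedSpace ℝ E]
  [NormedAddCommGroup F] [NormedSpace ℝ F] {f : E → F} {s : Set E}

theorem ContDiff.exists_lipschitzOnWith_fderiv (hf : ContDiff ℝ 2 f) (hs : IsCompact s) :
    ∃ K, LipschitzOnWith K (fderiv ℝ f) s :=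
  (hf.fderiv_right (m := 1) le_rfl).locallyLipschitz.locallyLipschitzOn
    |>.exists_lipschitzOnWith_of_compact hs

theorem Convex.norm_image_sub_sub_fderiv_le {K : NNReal} (hs : Convex ℝ s)
    (hf : ∀ x ∈ s, DifferentiableAt ℝ f x) (hK : LipschitzOnWith K (fderiv ℝ f) s)
    {x w : E} (hx : x ∈ s) (hw : w ∈ s) :
    ‖f w - f x - fderiv ℝ f x (w - x)‖ ≤ K * ‖w - x‖ ^ 2 := by
  set t := s ∩ Metric.closedBall x ‖w - x‖
  have bound : ∀ z ∈ t, ‖fderiv ℝ f z - fderiv ℝ f x‖ ≤ K * ‖w - x‖ := fun z hz =>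
    calc ‖fderiv ℝ f z - fderiv ℝ f x‖ ≤ K * ‖z - x‖ := hK.norm_sub_le hz.1 hx
      _ ≤ K * ‖w - x‖ := by gcongr; simpa [dist_eq_norm] using hz.2
  calc ‖f w - f x - fderiv ℝ f x (w - x)‖ ≤ K * ‖w - x‖ * ‖w - x‖ :=
        (hs.inter (convex_closedBall _ _)).norm_image_sub_le_of_norm_fderiv_le'
          (fun z hz => hf z hz.1) bound ⟨hx, by simp⟩ ⟨hw, by simp [dist_eq_norm]⟩
    _ = K * ‖w - x‖ ^ 2 := by ring

end Descent

theorem norm_smul_le_norm_add_smul {E : Type*} [NormedAddCommGroup E] [InnerProductSpace ℝ E]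
    {v g : E} {τ : ℝ} (h : 0 ≤ ‖v‖ ^ 2 + 2 * τ * ⟪v, g⟫) : ‖τ • g‖ ≤ ‖v + τ • g‖ := by
  refine sq_le_sq₀ (norm_nonneg _) (norm_nonneg _) |>.1 ?_
  rw [norm_add_sq_real, real_inner_smul_right]
  linarith

theorem exists_min_fixed_point_general {n m s : ℕ}
    (A : Fin m → Matrix (Fin n) (Fin n) ℝ) (y : Fin m → ℝ) :
    ∃ xhat ∈ sparseSet n s ∩ boxSet n,
      (∀ x ∈ sparseSet n s ∩ boxSet n, fObj A y xhat ≤ fObj A y x) ∧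
      ∃ l : ℝ, 0 < l ∧ ∀ τ : ℝ, 0 < τ → τ < min (1 / l) 1 →
        xhat ∈ projSet (sparseSet n s ∩ boxSet n) (xhat - τ • gradient (fObj A y) xhat) := by
  set f := fObj A y
  have hf : ContDiff ℝ 2 f := (contDiff_fObj A y).of_le le_top
  obtain ⟨xhat, hxhat, hmin⟩ :=
    ((isCompact_boxSet n).inter_left (isClosed_sparseSet n s)).exists_isMinOn
      ⟨0, zero_mem_sparseSet n s, zero_mem_boxSet n⟩ hf.continuous.continuousOn
  obtain ⟨K, hK⟩ := hf.exists_lipschitzOnWith_fderiv (isCompact_boxSet n)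
  refine ⟨xhat, hxhat, fun x hx => hmin hx, 2 * K + 1, by positivity,
    fun τ hτ hτl => ⟨hxhat, fun w hw => ?_⟩⟩
  have hτK : 2 * τ * K ≤ 1 := by
    have := (lt_div_iff₀ (by positivity)).1 (hτl.trans_le (min_le_left _ _))
    nlinarith
  have hinner : -(K * ‖w - xhat‖ ^ 2) ≤ ⟪w - xhat, gradient f xhat⟫ := by
    have hdesc := (convex_boxSet n).norm_image_sub_sub_fderiv_le
      (fun z _ => hf.differentiable (by norm_num) z) hK hxhat.2 hw.2
    have hfw : f xhat ≤ f w := hmin hw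
    rw [real_inner_comm, gradient, InnerProductSpace.toDual_symm_apply]
    linarith [le_of_abs_le hdesc]
  rw [sub_sub_cancel, sub_sub_eq_add_sub, add_sub_right_comm]
  apply norm_smul_le_norm_add_smul
  nlinarith [mul_le_mul_of_nonneg_left hinner (by positivity : 0 ≤ 2 * τ), sq_nonneg ‖w - xhat‖]

/-- Theorem 1: there exist a global minimizer `x̂` of `f` over `C_s ∩ B` and
`l > 0` such that `x̂` is a fixed point of the projected-gradient map for every
`τ ∈ (0, min{1/l, 1})`. -/
theorem exists_min_fixed_point {n m s : ℕ} (hn : 0 < n) (hm : 0 < m) (hs : 0 < s) (hsn : s ≤ n)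
    (A : Fin m → Matrix (Fin n) (Fin n) ℝ) (y : Fin m → ℝ) :
    ∃ xhat ∈ sparseSet n s ∩ boxSet n,
      (∀ x ∈ sparseSet n s ∩ boxSet n, fObj A y xhat ≤ fObj A y x) ∧
      ∃ l : ℝ, 0 < l ∧ ∀ τ : ℝ, 0 < τ → τ < min (1 / l) 1 →
        xhat ∈ projSet (sparseSet n s ∩ boxSet n) (xhat - τ • gradient (fObj A y) xhat) :=
  exists_min_fixed_point_general A y
end

section
/- For every z ∈ ℝⁿ, every x ∈ Π_{C_s ∩ B}(z), and all indices p, q ∈ {1,…,n}, it holds that (x_p − x_q)(z_p − z_q) ≥ 0. -/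
open scoped RealInnerProductSpace
open Finset Filter

/-!
If `x` is a nearest point of `S` to `z` and `T` is a linear isometry with `T x ∈ S`, then
comparing `‖x - z‖² ≤ ‖T x - z‖²` and using `‖T x‖ = ‖x‖` gives `⟪T x, z⟫ ≤ ⟪x, z⟫`.
Both `C_s` and `B` are invariant under permutations of coordinates, and for the transposition
of `p` and `q` one has `⟪x - T x, z⟫ = (x_p - x_q)(z_p - z_q)`.
-/

open LinearIsometryEquiv

theorem inner_le_inner_of_norm_eq_of_norm_sub_le {E : Type*} [NormedAddCommGroup E]
    [InnerProductSpace ℝ E] {x y z : E} (hnorm : ‖y‖ = ‖x‖) (h : ‖x - z‖ ≤ ‖y - z‖) :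
    ⟪y, z⟫ ≤ ⟪x, z⟫ := by
  have hsq := pow_le_pow_left₀ (norm_nonneg _) h 2
  rw [norm_sub_sq_real, norm_sub_sq_real, hnorm] at hsq
  linarith

theorem inner_le_inner_of_mem_projSet {n : ℕ} {S : Set (EuclideanSpace ℝ (Fin n))}
    {z x : EuclideanSpace ℝ (Fin n)} (hx : x ∈ projSet S z)
    (T : EuclideanSpace ℝ (Fin n) →ₗᵢ[ℝ] EuclideanSpace ℝ (Fin n)) (hTx : T x ∈ S) :
    ⟪T x, z⟫ ≤ ⟪x, z⟫ :=
  inner_le_inner_of_norm_eq_of_norm_sub_le (T.norm_map x) (hx.2 _ hTx)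

theorem l0norm_piLpCongrLeft {n : ℕ} (e : Fin n ≃ Fin n) (x : EuclideanSpace ℝ (Fin n)) :
    l0norm (piLpCongrLeft 2 ℝ ℝ e x) = l0norm x :=
  Nat.card_congr (e.symm.subtypeEquiv fun _ => by simp [piLpCongrLeft_apply])

theorem piLpCongrLeft_mem_sparseSet {n s : ℕ} (e : Fin n ≃ Fin n)
    {x : EuclideanSpace ℝ (Fin n)} (hx : x ∈ sparseSet n s) :
    piLpCongrLeft 2 ℝ ℝ e x ∈ sparseSet n s := by
  simpa only [sparseSet, Set.mem_ofPred_eq, l0norm_piLpCongrLeft] using hx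

theorem piLpCongrLeft_mem_boxSet {n : ℕ} (e : Fin n ≃ Fin n)
    {x : EuclideanSpace ℝ (Fin n)} (hx : x ∈ boxSet n) :
    piLpCongrLeft 2 ℝ ℝ e x ∈ boxSet n := fun i => by
  simpa [piLpCongrLeft_apply] using hx (e.symm i)

theorem inner_sub_piLpCongrLeft_swap {ι : Type*} [Fintype ι] [DecidableEq ι]
    (x z : EuclideanSpace ℝ ι) (p q : ι) :
    ⟪x - piLpCongrLeft 2 ℝ ℝ (Equiv.swap p q) x, z⟫ = (x p - x q) * (z p - z q) := by
  rcases eq_or_ne p q with rfl | hpq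
  · have hrefl : piLpCongrLeft 2 ℝ ℝ (Equiv.refl ι) x = x := by
      ext
      simp [piLpCongrLeft_apply]
    simp [hrefl]
  rw [PiLp.inner_apply, Fintype.sum_eq_add p q hpq]
  · simp only [PiLp.sub_apply, piLpCongrLeft_apply, Equiv.piCongrLeft'_apply, Equiv.symm_swap,
      Equiv.swap_apply_left, Equiv.swap_apply_right, RCLike.inner_apply, Real.ringHom_apply]
    ring
  · rintro i ⟨hip, hiq⟩
    simp [piLpCongrLeft_apply, Equiv.swap_apply_of_ne_of_ne hip hiq]

theorem proj_preserves_order_general {n s : ℕ}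
    (z : EuclideanSpace ℝ (Fin n)) {x : EuclideanSpace ℝ (Fin n)}
    (hx : x ∈ projSet (sparseSet n s ∩ boxSet n) z) (p q : Fin n) :
    0 ≤ (x p - x q) * (z p - z q) := by
  set T := piLpCongrLeft 2 ℝ ℝ (Equiv.swap p q)
  have hTx : T x ∈ sparseSet n s ∩ boxSet n :=
    ⟨piLpCongrLeft_mem_sparseSet _ hx.1.1, piLpCongrLeft_mem_boxSet _ hx.1.2⟩
  have h := inner_le_inner_of_mem_projSet hx T.toLinearIsometry hTx
  rw [← inner_sub_piLpCongrLeft_swap, inner_sub_left]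
  exact sub_nonneg.mpr h

/-- projections onto `C_s ∩ B` preserve the coordinate order of `z`
in the sense `(x_p − x_q)(z_p − z_q) ≥ 0`. -/
theorem proj_preserves_order {n s : ℕ} (hn : 0 < n) (hs : 0 < s) (hsn : s ≤ n)
    (z : EuclideanSpace ℝ (Fin n)) {x : EuclideanSpace ℝ (Fin n)}
    (hx : x ∈ projSet (sparseSet n s ∩ boxSet n) z) (p q : Fin n) :
    0 ≤ (x p - x q) * (z p - z q) :=
  proj_preserves_order_general z hx p q
end

section
/- Let z ∈ ℝⁿ and let S ⊆ {1,…,n} be a set of exactly s indices such that |z_i| ≥ |z_j| for every i ∈ S and every j ∉ S. Then the vector x defined by x_i = z_i for i ∈ S and x_i = 0 for i ∉ S belongs to Π_{C_s}(z); i.e., hard thresholding to the s largest-magnitude entries yields a Euclidean projection onto C_s. -/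
open scoped RealInnerProductSpace
open Finset Filter

/-! A vector `w` supported on `T` is at squared distance at least `∑_{i ∉ T} z_i²` from `z`, with
equality for the restriction of `z` to `T`, so it suffices that the `s` largest-magnitude
coordinates maximise `∑_{i ∈ T} z_i²` over sets `T` of size at most `s`. After cancelling the
common part, the coordinates they keep are at least as many, and each at least as large, as
those they drop. -/

namespace Finset

variable {ι : Type*} {f : ι → ℝ}

theorem sum_le_sum_of_card_le_of_forall_le {A B : Finset ι} (hB : ∀ b ∈ B, 0 ≤ f b)
    (hcard : #A ≤ #B) (hle : ∀ a ∈ A, ∀ b ∈ B, f a ≤ f b) : ∑ a ∈ A, f a ≤ ∑ b ∈ B, f b := by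
  rcases B.eq_empty_or_nonempty with rfl | hBne
  · simp [card_eq_zero.mp (Nat.le_zero.mp hcard)]
  obtain ⟨b₀, hb₀, hmin⟩ := B.exists_mem_eq_inf' hBne f
  calc ∑ a ∈ A, f a ≤ #A • B.inf' hBne f :=
        sum_le_card_nsmul _ _ _ fun a ha => hmin ▸ hle a ha b₀ hb₀
    _ ≤ #B • B.inf' hBne f := nsmul_le_nsmul_left (hmin ▸ hB b₀ hb₀) hcard
    _ ≤ ∑ b ∈ B, f b := card_nsmul_le_sum _ _ _ fun b hb => inf'_le f hb

theorem sum_le_sum_of_card_le_of_forall_notMem_le [DecidableEq ι] {S T : Finset ι}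
    (hf : ∀ i ∈ S, 0 ≤ f i) (hcard : #T ≤ #S) (hS : ∀ i ∈ S, ∀ j ∉ S, f j ≤ f i) :
    ∑ i ∈ T, f i ≤ ∑ i ∈ S, f i := by
  have hdrop : ∑ i ∈ T \ S, f i ≤ ∑ i ∈ S \ T, f i :=
    sum_le_sum_of_card_le_of_forall_le (fun i hi => hf i (mem_sdiff.mp hi).1)
      (card_sdiff_le_card_sdiff_iff.mpr hcard)
      fun a ha b hb => hS b (mem_sdiff.mp hb).1 a (mem_sdiff.mp ha).2
  rw [← sum_inter_add_sum_sdiff T S, ← sum_inter_add_sum_sdiff S T, inter_comm]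
  exact add_le_add_right hdrop _

end Finset

theorem l0norm_eq_card_filter {n : ℕ} (x : EuclideanSpace ℝ (Fin n)) :
    l0norm x = #{i | x i ≠ 0} := by
  rw [l0norm, Nat.card_eq_fintype_card, Fintype.card_subtype]

theorem l0norm_le_card {n : ℕ} {x : EuclideanSpace ℝ (Fin n)} {S : Finset (Fin n)}
    (hx : ∀ i ∉ S, x i = 0) : l0norm x ≤ #S := by
  rw [l0norm_eq_card_filter]
  exact card_le_card fun i hi => by_contra fun hiS => (mem_filter.mp hi).2 (hx i hiS)

theorem sum_sq_le_norm_sub_sq {ι : Type*} [Fintype ι] {w : EuclideanSpace ℝ ι} {Z : Finset ι}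
    (hw : ∀ i ∈ Z, w i = 0) (z : EuclideanSpace ℝ ι) :
    ∑ i ∈ Z, z i ^ 2 ≤ ‖w - z‖ ^ 2 := by
  rw [EuclideanSpace.real_norm_sq_eq]
  calc ∑ i ∈ Z, z i ^ 2 = ∑ i ∈ Z, (w - z) i ^ 2 :=
        sum_congr rfl fun i hi => by simp [hw i hi]
    _ ≤ ∑ i, (w - z) i ^ 2 := sum_le_univ_sum_of_nonneg fun i => sq_nonneg _

theorem norm_sub_sq_eq_sum_compl {ι : Type*} [Fintype ι] [DecidableEq ι]
    {x z : EuclideanSpace ℝ ι} {S : Finset ι}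
    (hx : ∀ i, x i = if i ∈ S then z i else 0) : ‖x - z‖ ^ 2 = ∑ i ∈ Sᶜ, z i ^ 2 := by
  rw [EuclideanSpace.real_norm_sq_eq, ← sum_compl_add_sum S]
  have hS : ∑ i ∈ S, (x - z) i ^ 2 = 0 := sum_eq_zero fun i hi => by simp [hx i, hi]
  rw [hS, add_zero]
  exact sum_congr rfl fun i hi => by simp [hx i, mem_compl.mp hi]

theorem hard_thresholding_is_proj_general {n s : ℕ}
    (z : EuclideanSpace ℝ (Fin n)) (S : Finset (Fin n)) (hScard : S.card = s)
    (hSbig : ∀ i ∈ S, ∀ j ∉ S, |z j| ≤ |z i|)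
    (x : EuclideanSpace ℝ (Fin n)) (hxdef : ∀ i, x i = if i ∈ S then z i else 0) :
    x ∈ projSet (sparseSet n s) z := by
  refine ⟨hScard ▸ l0norm_le_card fun i hi => by simp [hxdef i, hi], fun w hw => ?_⟩
  set T : Finset (Fin n) := {i | w i ≠ 0}
  have hT : #T ≤ #S := hScard ▸ (l0norm_eq_card_filter w).symm.trans_le hw
  have hkeep : ∑ i ∈ T, z i ^ 2 ≤ ∑ i ∈ S, z i ^ 2 :=
    sum_le_sum_of_card_le_of_forall_notMem_le (fun i _ => sq_nonneg _) hT
      fun i hi j hj => sq_le_sq.mpr (hSbig i hi j hj)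
  have hdrop : ∑ i ∈ Tᶜ, z i ^ 2 ≤ ‖w - z‖ ^ 2 :=
    sum_sq_le_norm_sub_sq (fun i hi => by simpa [T] using hi) z
  have hx : ‖x - z‖ ^ 2 ≤ ‖w - z‖ ^ 2 := by
    rw [norm_sub_sq_eq_sum_compl hxdef]
    linarith [sum_compl_add_sum S fun i => z i ^ 2, sum_compl_add_sum T fun i => z i ^ 2]
  exact (sq_le_sq₀ (norm_nonneg _) (norm_nonneg _)).mp hx

/-- hard thresholding to the `s` largest-magnitude entries is a Euclidean
projection onto `C_s`. -/
theorem hard_thresholding_is_proj {n s : ℕ} (hn : 0 < n) (hs : 0 < s) (hsn : s ≤ n)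
    (z : EuclideanSpace ℝ (Fin n)) (S : Finset (Fin n)) (hScard : S.card = s)
    (hSbig : ∀ i ∈ S, ∀ j ∉ S, |z j| ≤ |z i|)
    (x : EuclideanSpace ℝ (Fin n)) (hxdef : ∀ i, x i = if i ∈ S then z i else 0) :
    x ∈ projSet (sparseSet n s) z :=
  hard_thresholding_is_proj_general z S hScard hSbig x hxdef
end

section
/- Let z ∈ ℝⁿ. For each index i set c_i = min{max{z_i, 0}, 1} (the projection of z_i onto [0,1]) and g_i = z_i² − (z_i − c_i)². Let S ⊆ {1,…,n} be a set of exactly s indices that maximizes ∑_{i∈S} g_i over all s-element index sets. Then the vector x defined by x_i = c_i for i ∈ S and x_i = 0 for i ∉ S belongs to Π_{C_s ∩ B}(z); i.e., the projection onto C_s ∩ B can be computed by selecting a best super support of size s and clamping the selected entries to [0,1]. -/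
open scoped RealInnerProductSpace
open Finset Filter

private lemma clamp_best (a t : ℝ) (ht0 : 0 ≤ t) (ht1 : t ≤ 1) :
    (a - min (max a 0) 1) ^ 2 ≤ (a - t) ^ 2 := by
  rcases le_total a 0 with h | h
  · rw [max_eq_right h, min_eq_left (by norm_num : (0:ℝ) ≤ 1)]
    nlinarith
  · rcases le_total a 1 with h1 | h1
    · rw [max_eq_left h, min_eq_left h1]
      nlinarith [sq_nonneg (a - t)]
    · rw [max_eq_left h, min_eq_right h1]
      nlinarith

private lemma l0_eq {n : ℕ} (w : EuclideanSpace ℝ (Fin n)) :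
    l0norm w = (Finset.univ.filter (fun i => w i ≠ 0)).card := by
  rw [l0norm, Nat.card_eq_fintype_card, Fintype.card_subtype]

/-- the projection onto `C_s ∩ B` is obtained by selecting a best
super support of size `s` (maximizing the gains `g_i = z_i² − (z_i − c_i)²`) and clamping
the selected entries to `[0,1]`. -/
theorem two_stage_projection {n s : ℕ} (hn : 0 < n) (hs : 0 < s) (hsn : s ≤ n)
    (z : EuclideanSpace ℝ (Fin n)) (c g : Fin n → ℝ)
    (hc : ∀ i, c i = min (max (z i) 0) 1)
    (hg : ∀ i, g i = z i ^ 2 - (z i - c i) ^ 2)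
    (S : Finset (Fin n)) (hScard : S.card = s)
    (hSmax : ∀ T : Finset (Fin n), T.card = s → ∑ i ∈ T, g i ≤ ∑ i ∈ S, g i)
    (x : EuclideanSpace ℝ (Fin n)) (hxdef : ∀ i, x i = if i ∈ S then c i else 0) :
    x ∈ projSet (sparseSet n s ∩ boxSet n) z := by
  have hc01 : ∀ i, 0 ≤ c i ∧ c i ≤ 1 := by
    intro i; rw [hc i]
    constructor
    · exact le_min (le_max_right _ _) (by norm_num)
    · exact min_le_right _ _
  have hbest : ∀ i t, 0 ≤ t → t ≤ 1 → (z i - c i) ^ 2 ≤ (z i - t) ^ 2 := by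
    intro i t ht0 ht1; rw [hc i]; exact clamp_best _ _ ht0 ht1
  have hg0 : ∀ i, 0 ≤ g i := by
    intro i
    have := hbest i 0 le_rfl (by norm_num)
    rw [hg i]; nlinarith
  refine ⟨⟨?_, ?_⟩, ?_⟩
  · -- sparsity
    show l0norm x ≤ s
    rw [l0_eq]
    calc (Finset.univ.filter (fun i => x i ≠ 0)).card ≤ S.card := by
          apply Finset.card_le_card
          intro i hi
          simp only [Finset.mem_filter] at hi
          by_contra h
          exact hi.2 (by rw [hxdef i, if_neg h])
      _ = s := hScard
  · -- box
    intro i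
    rw [hxdef i]
    by_cases h : i ∈ S
    · rw [if_pos h]; exact hc01 i
    · rw [if_neg h]; norm_num
  · -- optimality
    intro w hw
    obtain ⟨hws, hwb⟩ := hw
    have hwcard : (Finset.univ.filter (fun i => w i ≠ 0)).card ≤ s := by
      rw [← l0_eq]; exact hws
    obtain ⟨T, hT0T, hTcard⟩ := Finset.exists_superset_card_eq hwcard
      (by simpa using hsn)
    have hwT : ∀ i ∉ T, w i = 0 := by
      intro i hi
      by_contra h
      exact hi (hT0T (Finset.mem_filter.mpr ⟨Finset.mem_univ i, h⟩))
    have key : ∀ v : EuclideanSpace ℝ (Fin n), ‖v - z‖ ^ 2 = ∑ i, (v i - z i) ^ 2 := by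
      intro v
      rw [EuclideanSpace.norm_eq, Real.sq_sqrt (by positivity)]
      congr 1; ext i
      rw [show (v - z) i = v i - z i from rfl, Real.norm_eq_abs, sq_abs]
    have hxsum : ∑ i, (x i - z i) ^ 2 = ∑ i, z i ^ 2 - ∑ i ∈ S, g i := by
      rw [← Finset.sum_add_sum_compl S (fun i => (x i - z i) ^ 2),
          ← Finset.sum_add_sum_compl S (fun i => z i ^ 2)]
      have h1 : ∑ i ∈ S, (x i - z i) ^ 2 = ∑ i ∈ S, (z i ^ 2 - g i) := by
        apply Finset.sum_congr rfl
        intro i hi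
        rw [hxdef i, if_pos hi, hg i]; ring
      have h2 : ∑ i ∈ Sᶜ, (x i - z i) ^ 2 = ∑ i ∈ Sᶜ, z i ^ 2 := by
        apply Finset.sum_congr rfl
        intro i hi
        rw [hxdef i, if_neg (Finset.mem_compl.mp hi)]; ring
      rw [h1, h2, Finset.sum_sub_distrib]; ring
    have hwsum : ∑ i, z i ^ 2 - ∑ i ∈ T, g i ≤ ∑ i, (w i - z i) ^ 2 := by
      rw [← Finset.sum_add_sum_compl T (fun i => (w i - z i) ^ 2),
          ← Finset.sum_add_sum_compl T (fun i => z i ^ 2)]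
      have h2 : ∑ i ∈ Tᶜ, (w i - z i) ^ 2 = ∑ i ∈ Tᶜ, z i ^ 2 := by
        apply Finset.sum_congr rfl
        intro i hi
        rw [hwT i (Finset.mem_compl.mp hi)]; ring
      have h1 : ∑ i ∈ T, (z i ^ 2 - g i) ≤ ∑ i ∈ T, (w i - z i) ^ 2 := by
        apply Finset.sum_le_sum
        intro i _
        have := hbest i (w i) (hwb i).1 (hwb i).2
        rw [hg i]; nlinarith
      rw [h2, Finset.sum_sub_distrib] at *
      linarith
    have hfinal : ∑ i, (x i - z i) ^ 2 ≤ ∑ i, (w i - z i) ^ 2 := by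
      have := hSmax T hTcard
      rw [hxsum]; linarith
    have h1 : ‖x - z‖ ^ 2 ≤ ‖w - z‖ ^ 2 := by rw [key, key]; exact hfinal
    exact le_of_pow_le_pow_left₀ two_ne_zero (norm_nonneg _) h1
end
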